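/- arXiv:hep-th/0409037 — 2 statements merged into one kernel-verified Lean document; each statement's English description precedes it below -/
import Mathlib

section
/- The Gram matrix of the ten vectors α_{-1}, α_0, α_1, ξ, α_7, α_6, α_5, α_4, α_2, α_8 (in that order), where ξ = α_2+2α_3+2α_4+2α_5+α_6+α_8, with respect to the E_10 bilinear form, equals the Cartan matrix of DE_10 as given by the DE_10 Dynkin diagram: a chain γ_{-1},...,γ_6 with extra nodes γ_7 attached to γ_1 and γ_8 attached to γ_5. -/
open Finset

/-- The `E₁₀` bilinear form on `ℤ¹⁰`:
`(α|β) = ∑ nᵢmᵢ − (1/9)(∑ nᵢ)(∑ mᵢ)`, with values in `ℚ`. -/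
def formE10 (x y : Fin 10 → ℤ) : ℚ :=
  (∑ i, (x i : ℚ) * (y i : ℚ)) - (1 / 9) * (∑ i, (x i : ℚ)) * (∑ i, (y i : ℚ))

/-- The simple roots of `E₁₀` in the standard basis: `sroot i` for `i = 0,…,8`
is `α_{i-1} = e_{i+1} − e_{i+2}` (the consecutive differences
`α₋₁,…,α₇`), and `sroot 9` is `α₈ = e₈ + e₉ + e₁₀`. -/
def sroot : Fin 10 → Fin 10 → ℤ := fun i j =>
  if i.val ≤ 8 then
    (if j.val = i.val then 1 else if j.val = i.val + 1 then -1 else 0)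
  else
    (if 7 ≤ j.val then 1 else 0)

/-- `ξ = α₂ + 2α₃ + 2α₄ + 2α₅ + α₆ + α₈`. -/
def xiRoot : Fin 10 → ℤ := fun j =>
  sroot 3 j + 2 * sroot 4 j + 2 * sroot 5 j + 2 * sroot 6 j + sroot 7 j + sroot 9 j

/-- The Cartan matrix of `DE₁₀`, nodes ordered `γ₋₁,…,γ₆,γ₇,γ₈`
(indices `0,…,7,8,9`): a chain `γ₋₁,…,γ₆` with `γ₇` attached to `γ₁`
(indices `8` and `2`) and `γ₈` attached to `γ₅` (indices `9` and `6`). -/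
def CartanDE10 : Fin 10 → Fin 10 → ℚ := fun i j =>
  if i = j then 2
  else if (i.val + 1 = j.val ∧ j.val ≤ 7) ∨ (j.val + 1 = i.val ∧ i.val ≤ 7) then -1
  else if (i.val = 2 ∧ j.val = 8) ∨ (i.val = 8 ∧ j.val = 2) then -1
  else if (i.val = 6 ∧ j.val = 9) ∨ (i.val = 9 ∧ j.val = 6) then -1
  else 0

/-- The ten vectors `α₋₁, α₀, α₁, ξ, α₇, α₆, α₅, α₄, α₂, α₈` in that order. -/
def deBasis : Fin 10 → (Fin 10 → ℤ) :=
  ![sroot 0, sroot 1, sroot 2, xiRoot, sroot 8, sroot 7, sroot 6, sroot 5,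
    sroot 3, sroot 9]

lemma formE10_int (x y : Fin 10 → ℤ) :
    formE10 x y = ((∑ i, x i * y i : ℤ) : ℚ)
      - 1/9 * ((∑ i, x i : ℤ) : ℚ) * ((∑ i, y i : ℤ) : ℚ) := by
  simp only [formE10]
  push_cast
  ring

def cartZ : Fin 10 → Fin 10 → ℤ := fun i j =>
  if i = j then 2
  else if (i.val + 1 = j.val ∧ j.val ≤ 7) ∨ (j.val + 1 = i.val ∧ i.val ≤ 7) then -1
  else if (i.val = 2 ∧ j.val = 8) ∨ (i.val = 8 ∧ j.val = 2) then -1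
  else if (i.val = 6 ∧ j.val = 9) ∨ (i.val = 9 ∧ j.val = 6) then -1
  else 0

lemma key : ∀ i j : Fin 10,
    9 * (∑ k, deBasis i k * deBasis j k) - (∑ k, deBasis i k) * (∑ k, deBasis j k)
      = 9 * cartZ i j := by decide

lemma cast_cart (i j : Fin 10) : (cartZ i j : ℚ) = CartanDE10 i j := by
  unfold cartZ CartanDE10
  split_ifs <;> norm_num

/-- The Gram matrix of `α₋₁, α₀, α₁, ξ, α₇, α₆, α₅, α₄, α₂, α₈` under the
`E₁₀` bilinear form equals the Cartan matrix of `DE₁₀`. -/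
theorem gram_eq_cartanDE10 :
    ∀ i j : Fin 10, formE10 (deBasis i) (deBasis j) = CartanDE10 i j := by
  intro i j
  rw [formE10_int]
  have h : (9:ℚ) * ((∑ k, deBasis i k * deBasis j k : ℤ) : ℚ)
      - ((∑ k, deBasis i k : ℤ) : ℚ) * ((∑ k, deBasis j k : ℤ) : ℚ)
      = 9 * ((cartZ i j : ℤ) : ℚ) := by exact_mod_cast congrArg (fun n : ℤ => (n : ℚ)) (key i j)
  rw [← cast_cart]
  linarith
end

section
/- The vector χ = (β_6 + 2β_7) + (2β_9 + 2β_10 + 2β_11 + 2β_12 + 2β_13 + 2β_14 + β_15 + β_16) in the DE_18 root lattice satisfies (χ|χ) = 2 and (χ|β_j) = 0 for all j = 9,...,16, and the Gram matrix of {β_{-1}, β_0, β_1, β_2, β_3, β_4, β_5, β_6, β_8, χ} equals the Cartan matrix of DE_10 (with χ playing the role of the node γ_8 attached to β_5, and β_8 the role of γ_7 attached to β_1). -/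
open Finset

/-- Edges of the `DE₁₈` Dynkin diagram. Nodes are indexed `0,…,17`
corresponding to `β₋₁, β₀, …, β₁₆`: a chain
`β₋₁,β₀,…,β₇,β₉,β₁₀,…,β₁₅` with `β₈` attached to `β₁` and `β₁₆`
attached to `β₁₄`. -/
def DE18Edges : List (ℕ × ℕ) :=
  [(0,1),(1,2),(2,3),(3,4),(4,5),(5,6),(6,7),(7,8),(8,10),(10,11),(11,12),
   (12,13),(13,14),(14,15),(15,16),(2,9),(15,17)]

/-- The `18×18` Cartan matrix `A₁₈` of `DE₁₈`: diagonal entries `2`, entry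
`−1` for adjacent nodes of the diagram, `0` otherwise. -/
def A18 : Matrix (Fin 18) (Fin 18) ℤ := fun i j =>
  if i = j then 2
  else if (i.val, j.val) ∈ DE18Edges ∨ (j.val, i.val) ∈ DE18Edges then -1
  else 0

/-- The `DE₁₈` bilinear form on root-coordinate vectors, determined by the
Cartan matrix: `(x|y) = ∑ᵢⱼ xᵢ (A₁₈)ᵢⱼ yⱼ`. -/
def formDE18 (x y : Fin 18 → ℚ) : ℚ :=
  ∑ i, ∑ j, x i * (A18 i j : ℚ) * y j

/-- The standard basis vector `βₖ` in root coordinates. -/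
def beta (k : Fin 18) : Fin 18 → ℚ := fun j => if j = k then 1 else 0

/-- `χ = (β₆ + 2β₇) + (2β₉ + 2β₁₀ + 2β₁₁ + 2β₁₂ + 2β₁₃ + 2β₁₄ + β₁₅ + β₁₆)`
in root coordinates (indices `β₋₁ = 0,…, β₁₆ = 17`). -/
def chiRoot : Fin 18 → ℚ := ![0,0,0,0,0,0,0,1,2,0,2,2,2,2,2,2,1,1]

/-- The ten vectors `β₋₁, β₀, β₁, β₂, β₃, β₄, β₅, β₆, β₈, χ` in the `DE₁₀`
node order `γ₋₁,…,γ₆, γ₇, γ₈` (so `β₈` plays the role of `γ₇` attached to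
`β₁`, and `χ` plays the role of `γ₈` attached to `β₅`). -/
def de10InDE18 : Fin 10 → (Fin 18 → ℚ) :=
  ![beta 0, beta 1, beta 2, beta 3, beta 4, beta 5, beta 6, beta 7, beta 9,
    chiRoot]

/-! The key computation is that the functional `(χ|·)` is `y ↦ y(β₇) − y(β₅)` (coordinates
`8` and `6`): χ is orthogonal to every simple root except `β₅` and `β₇`. This gives
`(χ|χ) = 2`, the orthogonality to `β₉,…,β₁₆`, and the `χ` row of the Gram matrix; the remaining
entries form a principal submatrix of `A₁₈`. -/

lemma A18_symm (i j : Fin 18) : A18 i j = A18 j i := by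
  revert i j
  unfold A18
  decide

lemma formDE18_comm (x y : Fin 18 → ℚ) : formDE18 x y = formDE18 y x := by
  rw [formDE18, Finset.sum_comm]
  refine Finset.sum_congr rfl fun j _ => Finset.sum_congr rfl fun i _ => ?_
  rw [A18_symm]
  ring

lemma formDE18_eq_sum (x y : Fin 18 → ℚ) :
    formDE18 x y = ∑ j, (∑ i, x i * (A18 i j : ℚ)) * y j := by
  simp only [formDE18, Finset.sum_mul]
  exact Finset.sum_comm

lemma formDE18_beta_right (x : Fin 18 → ℚ) (k : Fin 18) :
    formDE18 x (beta k) = ∑ i, x i * (A18 i k : ℚ) := by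
  simp [formDE18_eq_sum, beta]

lemma formDE18_beta_beta (k l : Fin 18) : formDE18 (beta k) (beta l) = A18 k l := by
  simp [formDE18_beta_right, beta]

lemma sum_chiRoot_mul_A18 (j : Fin 18) :
    ∑ i, chiRoot i * (A18 i j : ℚ) = beta 8 j - beta 6 j := by
  fin_cases j <;> simp [Fin.sum_univ_succ, chiRoot, A18, DE18Edges, beta] <;> norm_num

lemma formDE18_chiRoot_left (y : Fin 18 → ℚ) : formDE18 chiRoot y = y 8 - y 6 := by
  simp [formDE18_eq_sum, sum_chiRoot_mul_A18, sub_mul, beta]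

def de10SimpleRootIndex : Fin 9 → Fin 18 := ![0, 1, 2, 3, 4, 5, 6, 7, 9]

lemma de10InDE18_castSucc (a : Fin 9) :
    de10InDE18 a.castSucc = beta (de10SimpleRootIndex a) := by
  fin_cases a <;> rfl

lemma CartanDE10_symm (a b : Fin 10) : CartanDE10 a b = CartanDE10 b a := by
  revert a b
  unfold CartanDE10
  decide

lemma A18_de10SimpleRootIndex (a b : Fin 9) :
    (A18 (de10SimpleRootIndex a) (de10SimpleRootIndex b) : ℚ) =
      CartanDE10 a.castSucc b.castSucc := by
  revert a b
  unfold A18 CartanDE10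
  decide

lemma CartanDE10_last_castSucc (a : Fin 9) :
    CartanDE10 (Fin.last 9) a.castSucc =
      beta (de10SimpleRootIndex a) 8 - beta (de10SimpleRootIndex a) 6 := by
  fin_cases a <;> norm_num [CartanDE10, beta, de10SimpleRootIndex, Fin.ext_iff]

lemma formDE18_chiRoot_chiRoot : formDE18 chiRoot chiRoot = 2 := by
  rw [formDE18_chiRoot_left, show chiRoot 8 = 2 from rfl, show chiRoot 6 = 0 from rfl]
  norm_num

lemma formDE18_chiRoot_de10InDE18 (b : Fin 10) :
    formDE18 chiRoot (de10InDE18 b) = CartanDE10 (Fin.last 9) b := by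
  induction b using Fin.lastCases with
  | last => exact formDE18_chiRoot_chiRoot
  | cast b => rw [de10InDE18_castSucc, formDE18_chiRoot_left, CartanDE10_last_castSucc]

/-- `(χ|χ) = 2`, `χ` is orthogonal to the `so(16)` simple roots
`β₉,…,β₁₆`, and the Gram matrix of `{β₋₁,…,β₆, β₈, χ}` equals the Cartan
matrix of `DE₁₀`. -/
theorem chi_props :
    formDE18 chiRoot chiRoot = 2 ∧
    (∀ j : Fin 18, 10 ≤ j.val → formDE18 chiRoot (beta j) = 0) ∧
    (∀ a b : Fin 10, formDE18 (de10InDE18 a) (de10InDE18 b) = CartanDE10 a b) := by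
  refine ⟨formDE18_chiRoot_chiRoot, fun j hj => ?_, fun a b => ?_⟩
  · have h8 : (8 : Fin 18) ≠ j := by grind
    have h6 : (6 : Fin 18) ≠ j := by grind
    simp [formDE18_chiRoot_left, beta, h8, h6]
  · induction a using Fin.lastCases with
    | last => exact formDE18_chiRoot_de10InDE18 b
    | cast a =>
      induction b using Fin.lastCases with
      | last =>
        rw [formDE18_comm, CartanDE10_symm]
        exact formDE18_chiRoot_de10InDE18 _
      | cast b =>
        rw [de10InDE18_castSucc, de10InDE18_castSucc, formDE18_beta_beta,
          A18_de10SimpleRootIndex]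
end
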